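/- arXiv:1405.0148 — 2 statements merged into one kernel-verified Lean document; each statement's English description precedes it below -/
import Mathlib

section
/- Let a, σ > 0 and let L be the differential operator (Lf)(x) = (−a(x²−1) + (3σ²/2)x)·f'(x) + (σ²/2)(x²−1)·f''(x) acting on smooth compactly supported functions f on (1,∞). Let ρ(x) = √(x²−1)·exp(−(2a/σ²)x). Then for every smooth compactly supported f on (1,∞), ∫_1^∞ (Lf)(x)·ρ(x) dx = 0. -/
open MeasureTheory

/-- The density `ρ(x) = √(x²−1)·exp(−(2a/σ²)x)` is invariant for the generator
`L f = (−a(x²−1) + (3σ²/2)x) f' + (σ²/2)(x²−1) f''` of the asymptotic temporal diffusion: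
`∫ (Lf)·ρ = 0` for every smooth compactly supported `f` on `(1,∞)`. -/
theorem rho_invariant_density (a σ : ℝ) (ha : 0 < a) (hσ : 0 < σ)
    (ρ : ℝ → ℝ)
    (hρ : ρ = fun x => Real.sqrt (x ^ 2 - 1) * Real.exp (-(2 * a / σ ^ 2) * x)) :
    ∀ f : ℝ → ℝ, ContDiff ℝ (⊤ : ℕ∞) f → HasCompactSupport f → tsupport f ⊆ Set.Ioi 1 →
      ∫ x in Set.Ioi (1:ℝ),
        ((-a * (x ^ 2 - 1) + 3 * σ ^ 2 / 2 * x) * deriv f x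
          + σ ^ 2 / 2 * (x ^ 2 - 1) * deriv (deriv f) x) * ρ x = 0 := by
  intro f hf hfc hfs
  have hσ2 : σ ^ 2 ≠ 0 := by positivity
  set c : ℝ := 2 * a / σ ^ 2 with hc
  set F : ℝ → ℝ := fun x => (σ ^ 2 / 2 * (x ^ 2 - 1) * ρ x) * deriv f x with hF
  have hf' : ContDiff ℝ ((⊤ : ℕ∞) : WithTop ℕ∞) f := hf.of_le (by simp)
  have hdf : ContDiff ℝ ((⊤ : ℕ∞) : WithTop ℕ∞) (deriv f) := (contDiff_infty_iff_deriv.mp hf').2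
  have hdfs : tsupport (deriv f) ⊆ Set.Ioi 1 :=
    (closure_minimal support_deriv_subset (isClosed_tsupport f)).trans hfs
  have hFs : Function.support F ⊆ tsupport (deriv f) := by
    intro x hx
    by_contra h
    exact hx (by simp [hF, image_eq_zero_of_notMem_tsupport h])
  have hFc : HasCompactSupport F := hfc.deriv.mono' hFs
  -- key derivative computation on (1, ∞)
  have key : ∀ x ∈ Set.Ioi (1:ℝ), HasDerivAt F
      (((-a * (x ^ 2 - 1) + 3 * σ ^ 2 / 2 * x) * deriv f x
        + σ ^ 2 / 2 * (x ^ 2 - 1) * deriv (deriv f) x) * ρ x) x := by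
    intro x hx
    have hx1 : (1:ℝ) < x := hx
    have hpos : 0 < x ^ 2 - 1 := by nlinarith
    have hsne : x ^ 2 - 1 ≠ 0 := ne_of_gt hpos
    have hspos : 0 < Real.sqrt (x ^ 2 - 1) := Real.sqrt_pos.mpr hpos
    have hs2 : Real.sqrt (x ^ 2 - 1) ^ 2 = x ^ 2 - 1 := Real.sq_sqrt hpos.le
    have hu : HasDerivAt (fun y : ℝ => y ^ 2 - 1) (2 * x) x := by
      simpa using (hasDerivAt_pow 2 x).sub_const 1
    have hsq : HasDerivAt (fun y : ℝ => Real.sqrt (y ^ 2 - 1))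
        (2 * x / (2 * Real.sqrt (x ^ 2 - 1))) x := hu.sqrt hsne
    have hexp : HasDerivAt (fun y : ℝ => Real.exp (-c * y)) (-c * Real.exp (-c * x)) x := by
      simpa [mul_comm] using ((hasDerivAt_id x).const_mul (-c)).exp
    have hρd : HasDerivAt ρ (2 * x / (2 * Real.sqrt (x ^ 2 - 1)) * Real.exp (-c * x)
        + Real.sqrt (x ^ 2 - 1) * (-c * Real.exp (-c * x))) x := by
      rw [hρ]; exact hsq.mul hexp
    have hgd : HasDerivAt (fun y => σ ^ 2 / 2 * (y ^ 2 - 1) * ρ y)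
        (σ ^ 2 / 2 * (2 * x) * ρ x
          + σ ^ 2 / 2 * (x ^ 2 - 1) * (2 * x / (2 * Real.sqrt (x ^ 2 - 1)) * Real.exp (-c * x)
            + Real.sqrt (x ^ 2 - 1) * (-c * Real.exp (-c * x)))) x :=
      (hu.const_mul (σ ^ 2 / 2)).mul hρd
    have hfd : HasDerivAt (deriv f) (deriv (deriv f) x) x :=
      (hdf.differentiable (by simp) x).hasDerivAt
    have h := hgd.mul hfd
    refine HasDerivAt.congr_deriv h ?_
    rw [hρ, hc]
    simp only
    set s := Real.sqrt (x ^ 2 - 1) with hsdef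
    have hsne' : s ≠ 0 := ne_of_gt hspos
    rw [← hs2]
    field_simp
    ring
  have hFC1 : ContDiff ℝ 1 F := by
    rw [contDiff_iff_contDiffAt]
    intro x
    by_cases hx : x ∈ Set.Ioi (1:ℝ)
    · have hpos : 0 < x ^ 2 - 1 := by
        have : (1:ℝ) < x := hx
        nlinarith
      have h1 : ContDiffAt ℝ 1 (fun y : ℝ => y ^ 2 - 1) x :=
        ((contDiff_id.pow 2).sub contDiff_const).contDiffAt
      refine ContDiffAt.mul (ContDiffAt.mul (contDiffAt_const.mul h1) ?_) ?_
      · rw [hρ]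
        exact (h1.sqrt (ne_of_gt hpos)).mul ((contDiffAt_const.mul contDiffAt_id).exp)
      · exact (hdf.of_le (by exact_mod_cast le_top)).contDiffAt
    · have hmem : (tsupport (deriv f))ᶜ ∈ nhds x :=
        (isClosed_tsupport _).isOpen_compl.mem_nhds (fun h => hx (hdfs h))
      have hev : F =ᶠ[nhds x] (fun _ => (0 : ℝ)) := by
        filter_upwards [hmem] with y hy
        simp [hF, image_eq_zero_of_notMem_tsupport hy]
      exact ContDiffAt.congr_of_eventuallyEq contDiffAt_const hev
  have heq : ∫ x in Set.Ioi (1:ℝ),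
      ((-a * (x ^ 2 - 1) + 3 * σ ^ 2 / 2 * x) * deriv f x
        + σ ^ 2 / 2 * (x ^ 2 - 1) * deriv (deriv f) x) * ρ x
      = ∫ x in Set.Ioi (1:ℝ), deriv F x :=
    setIntegral_congr_fun measurableSet_Ioi (fun x hx => ((key x hx).deriv).symm)
  rw [heq, HasCompactSupport.integral_Ioi_deriv_eq hFC1 hFc 1]
  have h1 : deriv f 1 = 0 :=
    image_eq_zero_of_notMem_tsupport (fun h => (lt_irrefl (1:ℝ)) (hdfs h))
  simp [hF, h1]
end

section
/- Let a_n → a with a_n, a > 0, b > 0 fixed, and let f : (1,∞) → ℝ be monotone and integrable against ν_{a,b} as well as against each ν_{a_n,b}, where ν_{c,b} is the probability measure on (1,∞) with density C_{c,b}·√(x²−1)·exp(−(2c/b²)x). If additionally a_n ≥ a for all n, then ν_{a_n,b}(f) → ν_{a,b}(f) as n → ∞. -/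
/-!
With rates `k = 2a/b²` and `kₙ = 2aₙ/b²`, the hypothesis `aₙ ≥ a` gives `kₙ ≥ k`, so on
`(1,∞)` the unnormalized densities satisfy `ρ_{kₙ} ≤ ρ_k`. Hence `|f|·ρ_k` dominates every
`f·ρ_{kₙ}`, and dominated convergence makes both the numerators `∫ f ρ_{kₙ}` and the
normalizing constants `∫ ρ_{kₙ}` converge; the limiting normalizing constant is positive,
so the quotients converge.
-/

open MeasureTheory Filter Real Set Topology

theorem tendsto_integral_mul_of_abs_le_of_tendsto {α : Type*} [MeasurableSpace α]
    {μ : Measure α} {f ρ : α → ℝ} {ρs : ℕ → α → ℝ}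
    (hmeas : ∀ n, AEStronglyMeasurable (fun x => f x * ρs n x) μ)
    (hint : Integrable (fun x => f x * ρ x) μ)
    (hle : ∀ n, ∀ᵐ x ∂μ, |ρs n x| ≤ ρ x)
    (hlim : ∀ᵐ x ∂μ, Tendsto (fun n => ρs n x) atTop (𝓝 (ρ x))) :
    Tendsto (fun n => ∫ x, f x * ρs n x ∂μ) atTop (𝓝 (∫ x, f x * ρ x ∂μ)) := by
  refine tendsto_integral_of_dominated_convergence (fun x => |f x * ρ x|) hmeas hint.abs
    (fun n => ?_) (hlim.mono fun x hx => hx.const_mul (f x))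
  filter_upwards [hle n] with x hx
  rw [Real.norm_eq_abs, abs_mul, abs_mul]
  exact mul_le_mul_of_nonneg_left (hx.trans (le_abs_self _)) (abs_nonneg _)

/-- Unnormalized density of `ν_{c,b}`, in terms of the rate `k = 2c/b²`. -/
noncomputable def nuDensity (k x : ℝ) : ℝ := √(x ^ 2 - 1) * exp (-k * x)

theorem nuDensity_nonneg (k x : ℝ) : 0 ≤ nuDensity k x :=
  mul_nonneg (sqrt_nonneg _) (exp_pos _).le

theorem nuDensity_pos (k : ℝ) {x : ℝ} (hx : 1 < x) : 0 < nuDensity k x :=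
  mul_pos (sqrt_pos.2 (by nlinarith)) (exp_pos _)

theorem nuDensity_le_of_le {k k' x : ℝ} (hk : k ≤ k') (hx : 0 ≤ x) :
    nuDensity k' x ≤ nuDensity k x :=
  mul_le_mul_of_nonneg_left (exp_le_exp.2 (by nlinarith)) (sqrt_nonneg _)

theorem nuDensity_le_mul_exp (k : ℝ) {x : ℝ} (hx : 0 ≤ x) :
    nuDensity k x ≤ x * exp (-k * x) := by
  refine mul_le_mul_of_nonneg_right ?_ (exp_pos _).le
  calc √(x ^ 2 - 1) ≤ √(x ^ 2) := sqrt_le_sqrt (by linarith)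
    _ = x := sqrt_sq hx

theorem continuous_nuDensity (k : ℝ) : Continuous (nuDensity k) := by
  unfold nuDensity
  fun_prop

theorem continuous_nuDensity_rate (x : ℝ) : Continuous fun k => nuDensity k x := by
  unfold nuDensity
  fun_prop

theorem integrableOn_nuDensity {k : ℝ} (hk : 0 < k) : IntegrableOn (nuDensity k) (Ioi 1) := by
  have hmajorant : IntegrableOn (fun x : ℝ => x * exp (-k * x)) (Ioi 1) := by
    refine ((integrableOn_rpow_mul_exp_neg_mul_rpow (s := 1) (by norm_num) one_pos hk).mono_set
      (Ioi_subset_Ioi zero_le_one)).congr_fun (fun x _ => ?_) measurableSet_Ioi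
    simp only [rpow_one]
  refine hmajorant.mono' (continuous_nuDensity k).aestronglyMeasurable ?_
  filter_upwards [ae_restrict_mem measurableSet_Ioi] with x hx
  rw [Real.norm_eq_abs, abs_of_nonneg (nuDensity_nonneg k x)]
  exact nuDensity_le_mul_exp k (zero_le_one.trans (le_of_lt hx))

theorem setIntegral_nuDensity_pos {k : ℝ} (hk : 0 < k) : 0 < ∫ x in Ioi 1, nuDensity k x := by
  rw [setIntegral_pos_iff_support_of_nonneg_ae
    (Eventually.of_forall (nuDensity_nonneg k)) (integrableOn_nuDensity hk)]
  have hsupport : Ioi (1 : ℝ) ⊆ Function.support (nuDensity k) ∩ Ioi 1 :=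
    fun x hx => ⟨(nuDensity_pos k hx).ne', hx⟩
  exact (by simp : 0 < volume (Ioi (1 : ℝ))).trans_le (measure_mono hsupport)

theorem tendsto_integral_mul_nuDensity {k : ℝ} {ks : ℕ → ℝ} {f : ℝ → ℝ}
    (hge : ∀ n, k ≤ ks n) (hlim : Tendsto ks atTop (𝓝 k))
    (hmeas : ∀ n,
      AEStronglyMeasurable (fun x => f x * nuDensity (ks n) x) (volume.restrict (Ioi 1)))
    (hint : IntegrableOn (fun x => f x * nuDensity k x) (Ioi 1)) :
    Tendsto (fun n => ∫ x in Ioi 1, f x * nuDensity (ks n) x) atTop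
      (𝓝 (∫ x in Ioi 1, f x * nuDensity k x)) := by
  refine tendsto_integral_mul_of_abs_le_of_tendsto hmeas hint (fun n => ?_)
    (Eventually.of_forall fun x => ((continuous_nuDensity_rate x).tendsto k).comp hlim)
  filter_upwards [ae_restrict_mem measurableSet_Ioi] with x hx
  rw [abs_of_nonneg (nuDensity_nonneg _ x)]
  exact nuDensity_le_of_le (hge n) (zero_le_one.trans (le_of_lt hx))

theorem tendsto_nuDensity_average {k : ℝ} {ks : ℕ → ℝ} {f : ℝ → ℝ} (hk : 0 < k)
    (hge : ∀ n, k ≤ ks n) (hlim : Tendsto ks atTop (𝓝 k))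
    (hintn : ∀ n, IntegrableOn (fun x => f x * nuDensity (ks n) x) (Ioi 1))
    (hint : IntegrableOn (fun x => f x * nuDensity k x) (Ioi 1)) :
    Tendsto
      (fun n => (∫ x in Ioi 1, f x * nuDensity (ks n) x) / ∫ x in Ioi 1, nuDensity (ks n) x) atTop
      (𝓝 ((∫ x in Ioi 1, f x * nuDensity k x) / ∫ x in Ioi 1, nuDensity k x)) := by
  have hnum := tendsto_integral_mul_nuDensity hge hlim (fun n => (hintn n).aestronglyMeasurable)
    hint
  have hden := tendsto_integral_mul_nuDensity (f := fun _ => 1) hge hlim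
    (fun n => (continuous_nuDensity (ks n)).aestronglyMeasurable.const_mul 1)
    ((integrableOn_nuDensity hk).const_mul 1)
  simp only [one_mul] at hden
  exact hnum.div hden (setIntegral_nuDensity_pos hk).ne'

theorem nu_integral_tendsto_general
    (a b : ℝ) (ha : 0 < a) (hb : 0 < b)
    (aseq : ℕ → ℝ) (hge : ∀ n, a ≤ aseq n)
    (hlim : Tendsto aseq atTop (nhds a))
    (ρ : ℝ → ℝ → ℝ)
    (hρ : ρ = fun c x => Real.sqrt (x ^ 2 - 1) * Real.exp (-(2 * c / b ^ 2) * x))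
    (f : ℝ → ℝ)
    (hint : IntegrableOn (fun x => f x * ρ a x) (Set.Ioi 1))
    (hintn : ∀ n, IntegrableOn (fun x => f x * ρ (aseq n) x) (Set.Ioi 1)) :
    Tendsto
      (fun n => (∫ x in Set.Ioi (1:ℝ), f x * ρ (aseq n) x) /
                (∫ x in Set.Ioi (1:ℝ), ρ (aseq n) x))
      atTop
      (nhds ((∫ x in Set.Ioi (1:ℝ), f x * ρ a x) / (∫ x in Set.Ioi (1:ℝ), ρ a x))) := by
  subst hρ
  have hrate_ge (n : ℕ) : 2 * a / b ^ 2 ≤ 2 * aseq n / b ^ 2 := by gcongr; exact hge n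
  exact tendsto_nuDensity_average (by positivity) hrate_ge
    ((hlim.const_mul 2).div_const _) hintn hint

/-- Continuity of the invariant measures `ν_{c,b}` in the parameter `c`: if `aₙ → a` with
`aₙ ≥ a > 0` and `f` is monotone and integrable against the (unnormalized) densities, then
`ν_{aₙ,b}(f) → ν_{a,b}(f)`, where `ν_{c,b}(f)` is the normalized integral of `f` against
`√(x²−1)·exp(−(2c/b²)x)` on `(1,∞)`. -/
theorem nu_integral_tendsto
    (a b : ℝ) (ha : 0 < a) (hb : 0 < b)
    (aseq : ℕ → ℝ) (haseq : ∀ n, 0 < aseq n) (hge : ∀ n, a ≤ aseq n)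
    (hlim : Tendsto aseq atTop (nhds a))
    (ρ : ℝ → ℝ → ℝ)
    (hρ : ρ = fun c x => Real.sqrt (x ^ 2 - 1) * Real.exp (-(2 * c / b ^ 2) * x))
    (f : ℝ → ℝ)
    (hmono : MonotoneOn f (Set.Ioi 1) ∨ AntitoneOn f (Set.Ioi 1))
    (hint : IntegrableOn (fun x => f x * ρ a x) (Set.Ioi 1))
    (hintn : ∀ n, IntegrableOn (fun x => f x * ρ (aseq n) x) (Set.Ioi 1)) :
    Tendsto
      (fun n => (∫ x in Set.Ioi (1:ℝ), f x * ρ (aseq n) x) /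
                (∫ x in Set.Ioi (1:ℝ), ρ (aseq n) x))
      atTop
      (nhds ((∫ x in Set.Ioi (1:ℝ), f x * ρ a x) / (∫ x in Set.Ioi (1:ℝ), ρ a x))) :=
  nu_integral_tendsto_general a b ha hb aseq hge hlim ρ hρ f hint hintn
end
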